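/- The torus T(n1,n2) = C_{n1} □ C_{n2} admits an interval coloring if n1·n2 is even, and does not admit an interval coloring if n1·n2 is odd (with n1, n2 ≥ 3). -/

import Mathlib

open SimpleGraph

/-- `c` is an interval `t`-coloring of `G`: edges get colors in `{1,…,t}`, every color
`1,…,t` is used, adjacent edges get distinct colors, and the set of colors of edges
incident to any vertex is an interval of integers. -/
def IsIntervalColoring {V : Type*} (G : SimpleGraph V) (t : ℕ) (c : Sym2 V → ℕ) : Prop :=
  (∀ e ∈ G.edgeSet, 1 ≤ c e ∧ c e ≤ t) ∧
  (∀ i, 1 ≤ i → i ≤ t → ∃ e ∈ G.edgeSet, c e = i) ∧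
  (∀ v w₁ w₂, G.Adj v w₁ → G.Adj v w₂ → w₁ ≠ w₂ → c s(v, w₁) ≠ c s(v, w₂)) ∧
  (∀ v i j k, (∃ w, G.Adj v w ∧ c s(v, w) = i) → (∃ w, G.Adj v w ∧ c s(v, w) = k) →
    i ≤ j → j ≤ k → ∃ w, G.Adj v w ∧ c s(v, w) = j)

/-- `G` has an interval `t`-coloring. -/
def HasIntervalColoring {V : Type*} (G : SimpleGraph V) (t : ℕ) : Prop :=
  ∃ c : Sym2 V → ℕ, IsIntervalColoring G t c

/-- `G` is interval colorable (`G ∈ 𝔑`). -/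
def IntervalColorable {V : Type*} (G : SimpleGraph V) : Prop :=
  ∃ t : ℕ, 1 ≤ t ∧ HasIntervalColoring G t

/-- `w G`: the least number of colors in an interval coloring of `G`. -/
noncomputable def wNum {V : Type*} (G : SimpleGraph V) : ℕ :=
  sInf {t | HasIntervalColoring G t}

/-- `W G`: the greatest number of colors in an interval coloring of `G`. -/
noncomputable def WNum {V : Type*} (G : SimpleGraph V) : ℕ :=
  sSup {t | HasIntervalColoring G t}

/-- `G` is `r`-regular: every vertex has exactly `r` neighbors. -/
def IsRegularGraph {V : Type*} (G : SimpleGraph V) (r : ℕ) : Prop :=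
  ∀ v : V, (G.neighborSet v).ncard = r

/-- `c` is a proper edge coloring of `G` using colors `0,…,k-1`. -/
def IsProperEdgeColoring {V : Type*} (G : SimpleGraph V) (k : ℕ) (c : Sym2 V → ℕ) : Prop :=
  (∀ e ∈ G.edgeSet, c e < k) ∧
  (∀ v w₁ w₂, G.Adj v w₁ → G.Adj v w₂ → w₁ ≠ w₂ → c s(v, w₁) ≠ c s(v, w₂))

/-- The chromatic index `χ'(G)`. -/
noncomputable def edgeChromaticNumber {V : Type*} (G : SimpleGraph V) : ℕ :=
  sInf {k | ∃ c : Sym2 V → ℕ, IsProperEdgeColoring G k c}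

/-- `G` is 1-factorable: its edge set decomposes into perfect matchings. -/
def IsOneFactorable {V : Type*} (G : SimpleGraph V) : Prop :=
  ∃ (n : ℕ) (f : Fin n → SimpleGraph.Subgraph G),
    (∀ i, (f i).IsPerfectMatching) ∧
    (∀ e ∈ G.edgeSet, ∃! i, e ∈ (f i).edgeSet)

/-- The tensor (direct) product `G × H`. -/
def tensorProd {α β : Type*} (G : SimpleGraph α) (H : SimpleGraph β) :
    SimpleGraph (α × β) where
  Adj p q := G.Adj p.1 q.1 ∧ H.Adj p.2 q.2
  symm := Std.Symm.mk <| fun p q ⟨h₁, h₂⟩ => ⟨h₁.symm, h₂.symm⟩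
  loopless := Std.Irrefl.mk <| fun p h => G.loopless.irrefl p.1 h.1

/-- The strong tensor (semistrong) product `G ⊗ H`. -/
def strongTensorProd {α β : Type*} (G : SimpleGraph α) (H : SimpleGraph β) :
    SimpleGraph (α × β) where
  Adj p q := (G.Adj p.1 q.1 ∧ H.Adj p.2 q.2) ∨ (p.2 = q.2 ∧ G.Adj p.1 q.1)
  symm := Std.Symm.mk <| fun p q h => by
    rcases h with ⟨h₁, h₂⟩ | ⟨h₁, h₂⟩
    · exact Or.inl ⟨h₁.symm, h₂.symm⟩
    · exact Or.inr ⟨h₁.symm, h₂.symm⟩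
  loopless := Std.Irrefl.mk <| fun p h => by
    rcases h with ⟨h₁, _⟩ | ⟨_, h₁⟩ <;> exact G.loopless.irrefl p.1 h₁

/-- The strong product `G ⊠ H`. -/
def strongProd {α β : Type*} (G : SimpleGraph α) (H : SimpleGraph β) :
    SimpleGraph (α × β) where
  Adj p q := (G.Adj p.1 q.1 ∧ H.Adj p.2 q.2) ∨ (p.1 = q.1 ∧ H.Adj p.2 q.2) ∨
    (p.2 = q.2 ∧ G.Adj p.1 q.1)
  symm := Std.Symm.mk <| fun p q h => by
    rcases h with ⟨h₁, h₂⟩ | ⟨h₁, h₂⟩ | ⟨h₁, h₂⟩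
    · exact Or.inl ⟨h₁.symm, h₂.symm⟩
    · exact Or.inr (Or.inl ⟨h₁.symm, h₂.symm⟩)
    · exact Or.inr (Or.inr ⟨h₁.symm, h₂.symm⟩)
  loopless := Std.Irrefl.mk <| fun p h => by
    rcases h with ⟨h₁, _⟩ | ⟨_, h₂⟩ | ⟨_, h₁⟩
    · exact G.loopless.irrefl p.1 h₁
    · exact H.loopless.irrefl p.2 h₂
    · exact G.loopless.irrefl p.1 h₁

/-- The lexicographic product (composition) `G[H]`. -/
def lexProd {α β : Type*} (G : SimpleGraph α) (H : SimpleGraph β) :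
    SimpleGraph (α × β) where
  Adj p q := G.Adj p.1 q.1 ∨ (p.1 = q.1 ∧ H.Adj p.2 q.2)
  symm := Std.Symm.mk <| fun p q h => by
    rcases h with h₁ | ⟨h₁, h₂⟩
    · exact Or.inl h₁.symm
    · exact Or.inr ⟨h₁.symm, h₂.symm⟩
  loopless := Std.Irrefl.mk <| fun p h => by
    rcases h with h₁ | ⟨_, h₂⟩
    · exact G.loopless.irrefl p.1 h₁
    · exact H.loopless.irrefl p.2 h₂


/-!
An interval coloring of a `4`-regular graph shows four consecutive colors at every vertex, so
the edges whose color is divisible by `4` form a perfect matching and the number of vertices is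
even; this rules out odd tori.

Conversely, let `n₂` be even. Color `C_{n₁}` properly with `1, 2, 3` (the third color only on the
closing edge of an odd cycle), so that every vertex `v` misses exactly one color `μ v`, and color
the even cycle `C_{n₂}` with `1, 2`. In the copy of `C_{n₂}` over `v` use `μ v` instead of `1`
and `4` instead of `2`. Then every vertex of the torus sees each of `1, 2, 3, 4` exactly once.
-/

theorem Set.BijOn.union_of_disjoint {α β : Type*} {f : α → β} {s₁ s₂ : Set α} {t₁ t₂ : Set β}
    (h₁ : Set.BijOn f s₁ t₁) (h₂ : Set.BijOn f s₂ t₂) (h : Disjoint t₁ t₂) :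
    Set.BijOn f (s₁ ∪ s₂) (t₁ ∪ t₂) :=
  h₁.union h₂ <| (Set.injOn_union ((h.preimage f).mono h₁.mapsTo h₂.mapsTo)).mpr
    ⟨h₁.injOn, h₂.injOn, fun _ hx _ hy => h.ne_of_mem (h₁.mapsTo hx) (h₂.mapsTo hy)⟩

theorem Finset.existsUnique_dvd_of_ordConnected {S : Finset ℕ} {r : ℕ}
    (hS : (S : Set ℕ).OrdConnected) (hcard : S.card = r) (hr : 0 < r) :
    ∃! j, j ∈ S ∧ r ∣ j := by
  have hne : S.Nonempty := Finset.card_pos.mp (hcard ▸ hr)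
  set a := S.min' hne
  set b := S.max' hne
  have hS_eq : S = Finset.Icc a b := by
    refine Finset.Subset.antisymm
      (fun x hx => Finset.mem_Icc.mpr ⟨S.min'_le x hx, S.le_max' x hx⟩) fun x hx => ?_
    exact_mod_cast hS.out (S.min'_mem hne) (S.max'_mem hne) (Finset.mem_Icc.mp hx)
  rw [hS_eq, Nat.card_Icc] at hcard
  simp only [hS_eq, Finset.mem_Icc]
  have hdiv := Nat.mod_add_div b r
  have hmod := Nat.mod_lt b hr
  refine ⟨r * (b / r), ⟨⟨by omega, by omega⟩, dvd_mul_right r _⟩, ?_⟩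
  rintro _ ⟨⟨hpa, hpb⟩, p, rfl⟩
  have h₁ : p < b / r + 1 := Nat.lt_of_mul_lt_mul_left (a := r) (by rw [mul_add]; omega)
  have h₂ : b / r < p + 1 := Nat.lt_of_mul_lt_mul_left (a := r) (by rw [mul_add]; omega)
  rw [show p = b / r by omega]

namespace SimpleGraph

section EdgeColoring

variable {V : Type*}

def IsFullEdgeColoring (G : SimpleGraph V) (t : ℕ) (c : Sym2 V → ℕ) : Prop :=
  ∀ v, Set.BijOn (fun w => c s(v, w)) (G.neighborSet v) (Set.Icc 1 t)

def IsEdgeColoringMissing (G : SimpleGraph V) (t : ℕ) (c : Sym2 V → ℕ) (μ : V → ℕ) : Prop :=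
  ∀ v, μ v ∈ Set.Icc 1 t ∧
    Set.BijOn (fun w => c s(v, w)) (G.neighborSet v) (Set.Icc 1 t \ {μ v})

theorem IsFullEdgeColoring.isIntervalColoring [Nonempty V] {G : SimpleGraph V} {t : ℕ}
    {c : Sym2 V → ℕ} (hc : IsFullEdgeColoring G t c) : IsIntervalColoring G t c := by
  refine ⟨fun e he => ?_, fun i hi hit => ?_, fun v w₁ w₂ h₁ h₂ hne => ?_, ?_⟩
  · induction e using Sym2.ind with
    | _ v w => exact (hc v).mapsTo he
  · obtain ⟨v⟩ := ‹Nonempty V›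
    obtain ⟨w, hw, rfl⟩ := (hc v).surjOn ⟨hi, hit⟩
    exact ⟨s(v, w), hw, rfl⟩
  · exact fun h => hne ((hc v).injOn h₁ h₂ h)
  · rintro v _ j _ ⟨w, hw, rfl⟩ ⟨w', hw', rfl⟩ hij hjk
    obtain ⟨u, hu, rfl⟩ := (hc v).surjOn
      ⟨((hc v).mapsTo hw).1.trans hij, hjk.trans ((hc v).mapsTo hw').2⟩
    exact ⟨u, hu, rfl⟩

end EdgeColoring

section BoxProd

def layerColor (m r x : ℕ) : ℕ := if x = 1 then m else r + x

theorem bijOn_layerColor {m r s : ℕ} (hm : m ≤ r + 1) (hs : 1 ≤ s) :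
    Set.BijOn (layerColor m r) (Set.Icc 1 s) (insert m (Set.Icc (r + 2) (r + s))) := by
  refine ⟨fun x hx => ?_, fun x hx y hy hxy => ?_, fun y hy => ?_⟩
  · simp only [layerColor, Set.mem_Icc, Set.mem_insert_iff] at hx ⊢
    split_ifs <;> omega
  · simp only [layerColor, Set.mem_Icc] at hx hy hxy
    split_ifs at hxy <;> omega
  · obtain rfl | ⟨hy₁, hy₂⟩ := hy
    · exact ⟨1, ⟨le_rfl, hs⟩, if_pos rfl⟩
    · exact ⟨y - r, ⟨by omega, by omega⟩, by simp only [layerColor]; split_ifs <;> omega⟩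

variable {α β : Type*} [DecidableEq α] [DecidableEq β]

def boxProdEdgeColoring (cG : Sym2 α → ℕ) (μ : α → ℕ) (r : ℕ) (cH : Sym2 β → ℕ) :
    Sym2 (α × β) → ℕ :=
  Sym2.lift ⟨fun p q =>
    if p.2 = q.2 then cG s(p.1, q.1)
    else if p.1 = q.1 then layerColor (μ p.1) r (cH s(p.2, q.2))
    else 0, fun p q => by dsimp only; split_ifs <;> simp_all [Sym2.eq_swap]⟩

variable {G : SimpleGraph α} {H : SimpleGraph β} {cG : Sym2 α → ℕ} {μ : α → ℕ} {r : ℕ}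
  {cH : Sym2 β → ℕ}

theorem boxProdEdgeColoring_left (a a' : α) (b : β) :
    boxProdEdgeColoring cG μ r cH s((a, b), (a', b)) = cG s(a, a') := by
  simp [boxProdEdgeColoring]

theorem boxProdEdgeColoring_right (a : α) {b b' : β} (h : b ≠ b') :
    boxProdEdgeColoring cG μ r cH s((a, b), (a, b')) =
      layerColor (μ a) r (cH s(b, b')) := by
  simp [boxProdEdgeColoring, h]

theorem IsEdgeColoringMissing.isFullEdgeColoring_boxProd {s : ℕ}
    (hG : IsEdgeColoringMissing G (r + 1) cG μ) (hH : IsFullEdgeColoring H s cH) (hs : 1 ≤ s) :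
    IsFullEdgeColoring (G □ H) (r + s) (boxProdEdgeColoring cG μ r cH) := by
  rintro ⟨a, b⟩
  obtain ⟨hμ, hGa⟩ := hG a
  simp only [Set.mem_Icc] at hμ
  set f := fun p => boxProdEdgeColoring cG μ r cH s((a, b), p)
  have hleft : Set.BijOn f ((·, b) '' G.neighborSet a) (Set.Icc 1 (r + 1) \ {μ a}) := by
    rw [← Set.bijOn_comp_iff (Prod.mk_left_injective b).injOn]
    simpa [f, Function.comp_def, boxProdEdgeColoring_left] using hGa
  have hright : Set.BijOn f (Prod.mk a '' H.neighborSet b)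
      (insert (μ a) (Set.Icc (r + 2) (r + s))) := by
    rw [← Set.bijOn_comp_iff (Prod.mk_right_injective a).injOn]
    refine ((bijOn_layerColor hμ.2 hs).comp (hH b)).congr fun b' hb' => ?_
    simp [f, boxProdEdgeColoring_right a (H.ne_of_adj hb')]
  have hcolors : Set.Icc 1 (r + s) =
      Set.Icc 1 (r + 1) \ {μ a} ∪ insert (μ a) (Set.Icc (r + 2) (r + s)) := by
    ext x
    simp only [Set.mem_Icc, Set.mem_union, Set.mem_sdiff, Set.mem_singleton_iff,
      Set.mem_insert_iff]
    omega
  rw [neighborSet_boxProd, Set.prod_singleton, Set.singleton_prod, hcolors]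
  refine hleft.union_of_disjoint hright (Set.disjoint_left.mpr fun x hx hx' => ?_)
  simp only [Set.mem_Icc, Set.mem_sdiff, Set.mem_singleton_iff, Set.mem_insert_iff] at hx hx'
  omega

end BoxProd

section Cycle

/-- The edge `{x, x + 1}` starts at `x`; the closing edge `{n - 1, 0}` (and every non-edge)
at `n - 1`. -/
def cycleEdgeStart (n x y : ℕ) : ℕ := if y = x + 1 then x else if x = y + 1 then y else n - 1

def cycleColor (n k : ℕ) : ℕ := if n % 2 = 1 ∧ k = n - 1 then 3 else k % 2 + 1

def cycleMissingColor (n i : ℕ) : ℕ :=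
  if n % 2 = 1 ∧ i = 0 then 2 else if n % 2 = 1 ∧ i = n - 1 then 1 else 3

def cycleEdgeColoring (n : ℕ) : Sym2 (Fin n) → ℕ :=
  Sym2.lift ⟨fun u v => cycleColor n (cycleEdgeStart n u v), fun u v => by
    simp only [cycleEdgeStart]; split_ifs <;> omega⟩

variable {n : ℕ}

theorem cycleEdgeColoring_succ (v : Fin (n + 3)) :
    cycleEdgeColoring (n + 3) s(v, v + 1) = cycleColor (n + 3) v := by
  have := v.isLt
  simp only [cycleEdgeColoring, Sym2.lift_mk, cycleEdgeStart, Fin.val_add_one, Fin.ext_iff,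
    Fin.val_last]
  split_ifs <;> first | rfl | omega | (congr 1; omega)

theorem cycleEdgeColoring_pred (v : Fin (n + 3)) :
    cycleEdgeColoring (n + 3) s(v, v - 1) = cycleColor (n + 3) ↑(v - 1) := by
  have := v.isLt
  simp only [cycleEdgeColoring, Sym2.lift_mk, cycleEdgeStart, Fin.coe_sub_one, Fin.ext_iff,
    Fin.val_zero]
  split_ifs <;> first | rfl | omega

theorem cycleEdgeColoring_isEdgeColoringMissing :
    IsEdgeColoringMissing (cycleGraph (n + 3)) 3 (cycleEdgeColoring (n + 3))
      (cycleMissingColor (n + 3) ·) := by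
  intro v
  have hv := v.isLt
  have hpred : ((v - 1 : Fin (n + 3)) : ℕ) + 1 = v ∨
      ((v : ℕ) = 0 ∧ ((v - 1 : Fin (n + 3)) : ℕ) = n + 2) := by
    rw [Fin.coe_sub_one]
    split_ifs with h
    · simp [h]
    · rw [Fin.ext_iff, Fin.val_zero] at h
      omega
  refine ⟨by simp only [Set.mem_Icc, cycleMissingColor]; split_ifs <;> omega, ?_⟩
  rw [cycleGraph_neighborSet]
  refine ⟨?_, ?_, fun x hx => ?_⟩
  · rintro w (rfl | rfl)
    all_goals
      simp only [Set.mem_Icc, Set.mem_sdiff, Set.mem_singleton_iff, cycleEdgeColoring_pred,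
        cycleEdgeColoring_succ, cycleColor, cycleMissingColor]
      split_ifs <;> omega
  · rintro x (rfl | rfl) y (rfl | rfl) h
    all_goals first
      | rfl
      | (simp only [cycleEdgeColoring_pred, cycleEdgeColoring_succ, cycleColor] at h
         split_ifs at h <;> omega)
  · have : x = cycleColor (n + 3) ↑(v - 1) ∨ x = cycleColor (n + 3) v := by
      simp only [Set.mem_Icc, Set.mem_sdiff, Set.mem_singleton_iff, cycleMissingColor] at hx
      simp only [cycleColor]
      split_ifs at hx ⊢ <;> omega
    obtain rfl | rfl := this
    exacts [⟨v - 1, Or.inl rfl, cycleEdgeColoring_pred v⟩,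
      ⟨v + 1, Or.inr rfl, cycleEdgeColoring_succ v⟩]

theorem cycleEdgeColoring_isFullEdgeColoring (h : Even (n + 3)) :
    IsFullEdgeColoring (cycleGraph (n + 3)) 2 (cycleEdgeColoring (n + 3)) := by
  intro v
  have hmissing : cycleMissingColor (n + 3) v = 3 := by
    simp [cycleMissingColor, Nat.even_iff.mp h]
  have hcolors : Set.Icc 1 3 \ {3} = Set.Icc 1 2 := by
    ext
    simp only [Set.mem_sdiff, Set.mem_Icc, Set.mem_singleton_iff]
    omega
  simpa [hmissing, hcolors] using (cycleEdgeColoring_isEdgeColoringMissing v).2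

end Cycle

section Parity

variable {V W : Type*} {G : SimpleGraph V} {H : SimpleGraph W} {t : ℕ}

theorem IsIntervalColoring.comap (e : G ≃g H) {c : Sym2 W → ℕ}
    (hc : IsIntervalColoring H t c) : IsIntervalColoring G t (c ∘ Sym2.map e) := by
  obtain ⟨hrange, hused, hproper, hinterval⟩ := hc
  have hcolors : ∀ v i, (∃ w, G.Adj v w ∧ (c ∘ Sym2.map e) s(v, w) = i) ↔
      ∃ w, H.Adj (e v) w ∧ c s(e v, w) = i := by
    intro v i
    rw [e.surjective.exists]
    simp [Iso.map_adj_iff]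
  refine ⟨fun x hx => hrange _ (e.map_mem_edgeSet_iff.mpr hx), fun i hi hit => ?_,
    fun v w₁ w₂ h₁ h₂ hne => ?_, fun v i j k hi hk hij hjk => ?_⟩
  · obtain ⟨x, hx, rfl⟩ := hused i hi hit
    exact ⟨x.map e.symm, e.symm.map_mem_edgeSet_iff.mpr hx, by simp [Sym2.map_map]⟩
  · exact hproper _ _ _ (e.map_adj_iff.mpr h₁) (e.map_adj_iff.mpr h₂) (e.injective.ne hne)
  · exact (hcolors v j).mpr
      (hinterval _ i j k ((hcolors v i).mp hi) ((hcolors v k).mp hk) hij hjk)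

theorem IntervalColorable.of_iso (e : G ≃g H) (h : IntervalColorable H) : IntervalColorable G :=
  let ⟨t, ht, _, hc⟩ := h
  ⟨t, ht, _, hc.comap e⟩

variable [G.LocallyFinite] {r : ℕ}

theorem IsIntervalColoring.existsUnique_adj_dvd {c : Sym2 V → ℕ} (hc : IsIntervalColoring G t c)
    (hG : G.IsRegularOfDegree r) (hr : 0 < r) (v : V) : ∃! w, G.Adj v w ∧ r ∣ c s(v, w) := by
  classical
  obtain ⟨-, -, hproper, hinterval⟩ := hc
  set S := (G.neighborFinset v).image fun w => c s(v, w)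
  have hinj : Set.InjOn (fun w => c s(v, w)) (G.neighborFinset v) := fun w₁ h₁ w₂ h₂ h => by
    by_contra hne
    exact hproper v w₁ w₂ (by simpa using h₁) (by simpa using h₂) hne h
  have hcard : S.card = r := by
    rw [Finset.card_image_of_injOn hinj, card_neighborFinset_eq_degree, hG v]
  have hconn : (S : Set ℕ).OrdConnected := by
    refine ⟨fun i hi k hk j hj => ?_⟩
    simp only [S, Finset.coe_image, Set.mem_image, Finset.mem_coe, mem_neighborFinset]
      at hi hk ⊢
    exact hinterval v i j k hi hk hj.1 hj.2
  obtain ⟨_, ⟨hjS, hdvd⟩, huniq⟩ := Finset.existsUnique_dvd_of_ordConnected hconn hcard hr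
  obtain ⟨w, hw, rfl⟩ := Finset.mem_image.mp hjS
  refine ⟨w, ⟨by simpa using hw, hdvd⟩, fun w' ⟨hw', hdvd'⟩ => ?_⟩
  have hw'S : c s(v, w') ∈ S := Finset.mem_image_of_mem _ (by simpa using hw')
  exact hinj (by simpa using hw') hw (huniq _ ⟨hw'S, hdvd'⟩)

theorem IntervalColorable.even_card [Fintype V] (hG : G.IsRegularOfDegree r) (hr : 0 < r)
    (h : IntervalColorable G) : Even (Fintype.card V) := by
  obtain ⟨t, -, c, hc⟩ := h
  let M : G.Subgraph := toSubgraph (G ⊓ fromEdgeSet {e | r ∣ c e}) inf_le_left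
  refine Subgraph.IsPerfectMatching.even_card (M := M)
    (Subgraph.isPerfectMatching_iff.mpr fun v => ?_)
  convert hc.existsUnique_adj_dvd hG hr v using 3
  simpa [M] using fun h _ => h.ne

end Parity

theorem cycleGraph_boxProd_isRegularOfDegree (m n : ℕ) :
    (cycleGraph (m + 3) □ cycleGraph (n + 3)).IsRegularOfDegree 4 := fun x => by
  rw [degree_boxProd, cycleGraph_degree_three_le, cycleGraph_degree_three_le]

theorem intervalColorable_cycleGraph_boxProd_of_even_right (m : ℕ) {n : ℕ} (h : Even (n + 3)) :
    IntervalColorable (cycleGraph (m + 3) □ cycleGraph (n + 3)) :=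
  ⟨4, by norm_num, _, (cycleEdgeColoring_isEdgeColoringMissing.isFullEdgeColoring_boxProd
    (cycleEdgeColoring_isFullEdgeColoring h) one_le_two).isIntervalColoring⟩

end SimpleGraph

/-- The torus `T(n₁,n₂) = C_{n₁} □ C_{n₂}` is interval colorable iff `n₁·n₂` is even. -/
theorem torus_interval_colorable (n₁ n₂ : ℕ) (h₁ : 3 ≤ n₁) (h₂ : 3 ≤ n₂) :
    (Even (n₁ * n₂) → IntervalColorable (SimpleGraph.cycleGraph n₁ □ SimpleGraph.cycleGraph n₂)) ∧
    (Odd (n₁ * n₂) → ¬ IntervalColorable (SimpleGraph.cycleGraph n₁ □ SimpleGraph.cycleGraph n₂)) := by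
  obtain ⟨m, rfl⟩ := Nat.exists_eq_add_of_le' h₁
  obtain ⟨n, rfl⟩ := Nat.exists_eq_add_of_le' h₂
  refine ⟨fun heven => ?_, fun hodd hcol => ?_⟩
  · rcases Nat.even_mul.mp heven with h | h
    · exact (intervalColorable_cycleGraph_boxProd_of_even_right n h).of_iso (boxProdComm _ _)
    · exact intervalColorable_cycleGraph_boxProd_of_even_right m h
  · have heven := hcol.even_card (cycleGraph_boxProd_isRegularOfDegree m n) four_pos
    rw [Fintype.card_prod, Fintype.card_fin, Fintype.card_fin] at heven
    exact Nat.not_even_iff_odd.mpr hodd heven
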